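/- For every d ≥ 4 there exists a finite set S of isometries of Euclidean space ℝᵈ such that ℓ(S) > 0 but λ_∞(S) = 0; in particular every element of the semigroup generated by S fixes a point of ℝᵈ, yet S has no common fixed point, so the Berger–Wang identity λ_∞(S) = ℓ(S) fails for isometries of Euclidean spaces of dimension at least 4. -/

import Mathlib

open Pointwise Filter

/-- The joint displacement of a set of isometries at a point:
`L(S,x) = max_{s ∈ S} d(x, s x)`. -/
noncomputable def jointDispAt {X : Type*} [MetricSpace X] (S : Set (X ≃ᵢ X)) (x : X) : ℝ :=
  sSup ((fun s : X ≃ᵢ X => dist x (s x)) '' S)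

/-- The joint minimal displacement `L(S) = inf_x L(S,x)`. -/
noncomputable def jointMinDisp {X : Type*} [MetricSpace X] (S : Set (X ≃ᵢ X)) : ℝ :=
  sInf (Set.range (jointDispAt S))

/-- The asymptotic joint displacement `ℓ(S) = lim_n L(S^n)/n`; the limit exists by
subadditivity, hence agrees with the `limsup` used here. -/
noncomputable def asympDisp {X : Type*} [MetricSpace X] (S : Set (X ≃ᵢ X)) : ℝ :=
  Filter.limsup (fun n : ℕ => jointMinDisp (S ^ n) / n) Filter.atTop

/-- `λ(S) = max_{s ∈ S} ℓ(s)`. -/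
noncomputable def lamD {X : Type*} [MetricSpace X] (S : Set (X ≃ᵢ X)) : ℝ :=
  sSup ((fun s : X ≃ᵢ X => asympDisp {s}) '' S)

/-- `λ_k(S) = max_{1 ≤ j ≤ k} λ(S^j)/j`. -/
noncomputable def lamK {X : Type*} [MetricSpace X] (k : ℕ) (S : Set (X ≃ᵢ X)) : ℝ :=
  sSup ((fun j : ℕ => lamD (S ^ j) / j) '' Set.Icc 1 k)

/-- `λ_∞(S) = sup_{j ≥ 1} λ(S^j)/j`. -/
noncomputable def lamInf {X : Type*} [MetricSpace X] (S : Set (X ≃ᵢ X)) : ℝ :=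
  sSup ((fun j : ℕ => lamD (S ^ j) / j) '' Set.Ici 1)

/-- A geodesic segment from `a` to `b`: an isometric image of the interval `[0, d(a,b)]`. -/
def IsGeodesicSegment {X : Type*} [MetricSpace X] (s : Set X) (a b : X) : Prop :=
  ∃ f : ℝ → X, f 0 = a ∧ f (dist a b) = b ∧
    (∀ u ∈ Set.Icc (0 : ℝ) (dist a b), ∀ v ∈ Set.Icc (0 : ℝ) (dist a b),
      dist (f u) (f v) = |u - v|) ∧
    s = f '' Set.Icc (0 : ℝ) (dist a b)

/-- A geodesic metric space: every two points are joined by a geodesic segment. -/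
def GeodesicSpace (X : Type*) [MetricSpace X] : Prop :=
  ∀ a b : X, ∃ s : Set X, IsGeodesicSegment s a b

/-- `δ`-hyperbolicity: every geodesic triangle is `δ`-thin, i.e. each side is contained in
the closed `δ`-neighborhood of the union of the other two sides. -/
def GromovHyperbolic (X : Type*) [MetricSpace X] (δ : ℝ) : Prop :=
  ∀ a b c : X, ∀ sab sbc sca : Set X,
    IsGeodesicSegment sab a b → IsGeodesicSegment sbc b c → IsGeodesicSegment sca c a →
      (∀ x ∈ sab, ∃ y ∈ sbc ∪ sca, dist x y ≤ δ) ∧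
      (∀ x ∈ sbc, ∃ y ∈ sab ∪ sca, dist x y ≤ δ) ∧
      (∀ x ∈ sca, ∃ y ∈ sab ∪ sbc, dist x y ≤ δ)

/-- The CAT(0) comparison inequality: for all `a b c` and every midpoint `m` of a geodesic
from `b` to `c`, `2 d(a,m)² ≤ d(a,b)² + d(a,c)² - d(b,c)²/2`. -/
def CAT0 (X : Type*) [MetricSpace X] : Prop :=
  ∀ a b c m : X, dist b m = dist b c / 2 → dist m c = dist b c / 2 →
    2 * dist a m ^ 2 ≤ dist a b ^ 2 + dist a c ^ 2 - dist b c ^ 2 / 2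

/-- A subset is (geodesically) convex if every geodesic segment between two of its points is
contained in it. -/
def GeodConvex {X : Type*} [MetricSpace X] (C : Set X) : Prop :=
  ∀ a ∈ C, ∀ b ∈ C, ∀ s : Set X, IsGeodesicSegment s a b → s ⊆ C

/-- Translation length `L(g) = inf_x d(x, g x)`. -/
noncomputable def transLen {X : Type*} [MetricSpace X] (g : X ≃ᵢ X) : ℝ :=
  sInf (Set.range fun x : X => dist x (g x))

/-- Asymptotic translation length `ℓ(g) = lim_n L(g^n)/n`. -/
noncomputable def asympTransLen {X : Type*} [MetricSpace X] (g : X ≃ᵢ X) : ℝ :=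
  Filter.limsup (fun n : ℕ => transLen (g ^ n) / n) Filter.atTop


/-!
Let `R` be the rotation by the angle `1` in a coordinate plane `P`, let `e ∈ P` be a unit vector,
and let `S` consist of `R` and `x ↦ R x + e`: two rotations by the same angle about different
centres, so `S` has no common fixed point. A product of `n ≥ 1` elements of `S` is `x ↦ Rⁿ x + t`
with `t ∈ P`; as `π` is irrational, `Rⁿ` fixes no nonzero vector of `P`, so `Rⁿ - 1` is invertible
on `P` and the product has a fixed point, whence `λ_∞(S) = 0`. On the other hand, choosing the
`k`-th factor according to the sign of `cos k` gives two products of length `n` whose translation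
parts differ in the `e`-coordinate by `∑_{k<n} |cos k|`, and `|cos a| + |cos (a + 1)| ≥ sin 1`;
so `L(Sⁿ)` grows linearly and `ℓ(S) > 0`.
-/

theorem Set.Finite.pow {M : Type*} [Monoid M] {s : Set M} (hs : s.Finite) (n : ℕ) :
    (s ^ n).Finite := by
  induction n with
  | zero => rw [pow_zero]; exact Set.finite_one
  | succ n ih => rw [pow_succ]; exact ih.mul hs

theorem Real.sSup_image_eq_zero {α : Type*} {s : Set α} {f : α → ℝ} (hf : ∀ a ∈ s, f a = 0) :
    sSup (f '' s) = 0 :=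
  le_antisymm (Real.sSup_nonpos (by rintro _ ⟨a, ha, rfl⟩; exact (hf a ha).le))
    (Real.sSup_nonneg (by rintro _ ⟨a, ha, rfl⟩; exact (hf a ha).ge))

section JointDisplacement

variable {X : Type*} [MetricSpace X] {S T : Set (X ≃ᵢ X)}

theorem jointDispAt_nonneg (S : Set (X ≃ᵢ X)) (x : X) : 0 ≤ jointDispAt S x :=
  Real.sSup_nonneg (by rintro _ ⟨s, -, rfl⟩; exact dist_nonneg)

theorem dist_le_jointDispAt (hS : S.Finite) {g : X ≃ᵢ X} (hg : g ∈ S) (x : X) :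
    dist x (g x) ≤ jointDispAt S x :=
  le_csSup (hS.image _).bddAbove (Set.mem_image_of_mem _ hg)

theorem jointMinDisp_le_jointDispAt (S : Set (X ≃ᵢ X)) (x : X) :
    jointMinDisp S ≤ jointDispAt S x :=
  csInf_le ⟨0, by rintro _ ⟨y, rfl⟩; exact jointDispAt_nonneg S y⟩ ⟨x, rfl⟩

theorem jointDispAt_mul_le (hS : S.Finite) (hT : T.Finite) (x : X) :
    jointDispAt (S * T) x ≤ jointDispAt S x + jointDispAt T x := by
  refine Real.sSup_le ?_ (add_nonneg (jointDispAt_nonneg S x) (jointDispAt_nonneg T x))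
  rintro _ ⟨_, ⟨g, hg, h, hh, rfl⟩, rfl⟩
  calc dist x ((g * h) x) ≤ dist x (g x) + dist (g x) (g (h x)) := dist_triangle _ _ _
    _ = dist x (g x) + dist x (h x) := by rw [g.dist_eq]
    _ ≤ jointDispAt S x + jointDispAt T x :=
      add_le_add (dist_le_jointDispAt hS hg x) (dist_le_jointDispAt hT hh x)

theorem jointDispAt_pow_le (hS : S.Finite) (n : ℕ) (x : X) :
    jointDispAt (S ^ n) x ≤ n * jointDispAt S x := by
  induction n with
  | zero =>
    refine Real.sSup_le ?_ (by simp)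
    rintro _ ⟨g, hg, rfl⟩
    rw [pow_zero, Set.mem_one] at hg
    simp [hg]
  | succ n ih =>
    rw [pow_succ, Nat.cast_succ, add_one_mul]
    exact (jointDispAt_mul_le (hS.pow n) hS x).trans (by gcongr)

theorem le_two_mul_jointMinDisp [Nonempty X] (hS : S.Finite) {g h : X ≃ᵢ X} (hg : g ∈ S)
    (hh : h ∈ S) {c : ℝ} (hc : ∀ x, c ≤ dist (g x) (h x)) : c ≤ 2 * jointMinDisp S := by
  suffices c / 2 ≤ jointMinDisp S by linarith
  refine le_csInf (Set.range_nonempty _) ?_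
  rintro _ ⟨x, rfl⟩
  have := (hc x).trans (dist_triangle_left (g x) (h x) x)
  linarith [dist_le_jointDispAt hS hg x, dist_le_jointDispAt hS hh x]

theorem asympDisp_pos [Nonempty X] (hS : S.Finite) {c : ℝ} (hc : 0 < c)
    (h : ∀ n : ℕ, c * n ≤ jointMinDisp (S ^ (n + 1))) : 0 < asympDisp S := by
  obtain ⟨x⟩ := ‹Nonempty X›
  have hbdd : IsBoundedUnder (· ≤ ·) atTop fun n : ℕ => jointMinDisp (S ^ n) / n := by
    refine isBoundedUnder_of ⟨jointDispAt S x, fun n => ?_⟩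
    rcases n.eq_zero_or_pos with rfl | hn
    · simpa using jointDispAt_nonneg S x
    rw [div_le_iff₀' (by exact_mod_cast hn)]
    exact (jointMinDisp_le_jointDispAt _ x).trans (jointDispAt_pow_le hS n x)
  have hfreq : ∃ᶠ n : ℕ in atTop, c / 2 ≤ jointMinDisp (S ^ n) / n := by
    refine Filter.Eventually.frequently (Filter.eventually_atTop.mpr ⟨2, fun n hn => ?_⟩)
    obtain ⟨m, rfl⟩ : ∃ m, n = m + 1 := ⟨n - 1, by omega⟩
    have hm : (1 : ℝ) ≤ m := by exact_mod_cast (by omega : 1 ≤ m)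
    rw [le_div_iff₀ (by positivity), Nat.cast_succ]
    nlinarith [h m]
  exact (half_pos hc).trans_le (le_limsup_of_frequently_le hfreq hbdd)

theorem jointMinDisp_singleton_eq_zero {g : X ≃ᵢ X} (hg : ∃ x, g x = x) :
    jointMinDisp {g} = 0 := by
  obtain ⟨x, hx⟩ := hg
  have hdisp : ∀ y, jointDispAt {g} y = dist y (g y) := fun y => by
    rw [jointDispAt, Set.image_singleton, csSup_singleton]
  refine le_antisymm ?_ (le_csInf ⟨_, x, rfl⟩ ?_)
  · simpa [hdisp, hx] using jointMinDisp_le_jointDispAt {g} x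
  · rintro _ ⟨y, rfl⟩
    exact jointDispAt_nonneg _ y

theorem asympDisp_singleton_eq_zero {g : X ≃ᵢ X} (hg : ∀ n, 1 ≤ n → ∃ x, (g ^ n) x = x) :
    asympDisp {g} = 0 := by
  have hzero : (fun n : ℕ => jointMinDisp ({g} ^ n) / n) = fun _ => 0 := by
    funext n
    rcases n.eq_zero_or_pos with rfl | hn
    · simp
    · rw [Set.singleton_pow, jointMinDisp_singleton_eq_zero (hg n hn), zero_div]
  rw [asympDisp, hzero, limsup_const]

theorem lamInf_eq_zero (hS : ∀ n : ℕ, 1 ≤ n → ∀ g ∈ S ^ n, ∃ x, g x = x) : lamInf S = 0 := by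
  refine Real.sSup_image_eq_zero fun j (hj : 1 ≤ j) => ?_
  rw [lamD, Real.sSup_image_eq_zero, zero_div]
  intro g hg
  refine asympDisp_singleton_eq_zero fun n hn => hS (j * n) (Nat.one_le_iff_ne_zero.mpr ?_) _ ?_
  · positivity
  · rw [pow_mul]
    exact Set.pow_mem_pow hg

end JointDisplacement

theorem Submodule.exists_add_eq_self {K V : Type*} [DivisionRing K] [AddCommGroup V] [Module K V]
    {W : Submodule K V} [FiniteDimensional K W] {B : V →ₗ[K] V} (hBW : ∀ x ∈ W, B x ∈ W)
    (hB : ∀ x ∈ W, B x = x → x = 0) {t : V} (ht : t ∈ W) : ∃ x, B x + t = x := by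
  let f : W →ₗ[K] W := (B - LinearMap.id).restrict fun x hx => W.sub_mem (hBW x hx) hx
  have hf : Function.Injective f := by
    refine (injective_iff_map_eq_zero f).mpr fun x hx => Subtype.ext (hB x x.2 ?_)
    simpa [f, sub_eq_zero] using congrArg Subtype.val hx
  obtain ⟨x, hx⟩ := LinearMap.injective_iff_surjective.mp hf ⟨-t, W.neg_mem ht⟩
  refine ⟨x, ?_⟩
  have := congrArg Subtype.val hx
  simp only [f, LinearMap.coe_restrict_apply, LinearMap.sub_apply, LinearMap.id_apply] at this
  rw [neg_eq_iff_eq_neg.mp this.symm]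
  abel

section AffineIsometry

variable {V : Type*} [NormedAddCommGroup V] [NormedSpace ℝ V] (A : V ≃ₗᵢ[ℝ] V)

def affineIso (v : V) : V ≃ᵢ V :=
  A.toIsometryEquiv.trans (IsometryEquiv.addRight v)

@[simp]
theorem affineIso_apply (v x : V) : affineIso A v x = A x + v := rfl

theorem exists_eq_pow_add_of_mem_pow {W : Submodule ℝ V} (hAW : ∀ x ∈ W, A x ∈ W) {T : Set V}
    (hTW : T ⊆ W) {n : ℕ} {g : V ≃ᵢ V} (hg : g ∈ (affineIso A '' T) ^ n) :
    ∃ t ∈ W, ∀ x, g x = (A ^ n) x + t := by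
  induction n generalizing g with
  | zero =>
    rw [pow_zero, Set.mem_one] at hg
    exact ⟨0, W.zero_mem, fun x => by simp [hg]⟩
  | succ n ih =>
    rw [pow_succ', Set.mem_mul] at hg
    obtain ⟨_, ⟨v, hv, rfl⟩, u, hu, rfl⟩ := hg
    obtain ⟨t, ht, hut⟩ := ih hu
    refine ⟨A t + v, W.add_mem (hAW t ht) (hTW hv), fun x => ?_⟩
    rw [IsometryEquiv.mul_apply, hut, affineIso_apply, pow_succ', LinearIsometryEquiv.coe_mul,
      Function.comp_apply, map_add, add_assoc]

def affineWord (v : ℕ → V) : ℕ → V ≃ᵢ V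
  | 0 => 1
  | n + 1 => affineWord v n * affineIso A (v n)

theorem affineWord_apply (v : ℕ → V) (n : ℕ) (x : V) :
    affineWord A v n x = (A ^ n) x + ∑ k ∈ Finset.range n, (A ^ k) (v k) := by
  induction n generalizing x with
  | zero => simp [affineWord]
  | succ n ih =>
    rw [affineWord, IsometryEquiv.mul_apply, ih, affineIso_apply, map_add, Finset.sum_range_succ,
      pow_succ, LinearIsometryEquiv.coe_mul, Function.comp_apply]
    abel

theorem affineWord_mem {T : Set V} {v : ℕ → V} (hv : ∀ k, v k ∈ T) (n : ℕ) :
    affineWord A v n ∈ (affineIso A '' T) ^ n := by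
  induction n with
  | zero => exact Set.mem_one.mpr rfl
  | succ n ih => exact pow_succ (affineIso A '' T) n ▸ Set.mul_mem_mul ih ⟨v n, hv n, rfl⟩

theorem dist_affineWord (v v' : ℕ → V) (n : ℕ) (x : V) :
    dist (affineWord A v n x) (affineWord A v' n x) =
      ‖∑ k ∈ Finset.range n, (A ^ k) (v k - v' k)‖ := by
  rw [affineWord_apply, affineWord_apply, dist_add_left, dist_eq_norm]
  simp only [map_sub, Finset.sum_sub_distrib]

end AffineIsometry

section PlaneRotation

open Real

variable {d : ℕ} {i j : Fin d}

noncomputable def planeRotFun (i j : Fin d) (θ : ℝ) (x : EuclideanSpace ℝ (Fin d)) :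
    EuclideanSpace ℝ (Fin d) :=
  WithLp.toLp 2 fun k =>
    if k = i then cos θ * x i - sin θ * x j
    else if k = j then sin θ * x i + cos θ * x j
    else x k

theorem planeRotFun_apply_left (θ : ℝ) (x : EuclideanSpace ℝ (Fin d)) :
    planeRotFun i j θ x i = cos θ * x i - sin θ * x j := by
  simp [planeRotFun]

theorem planeRotFun_apply_right (hij : i ≠ j) (θ : ℝ) (x : EuclideanSpace ℝ (Fin d)) :
    planeRotFun i j θ x j = sin θ * x i + cos θ * x j := by
  simp [planeRotFun, hij.symm]

theorem planeRotFun_apply_of_ne {k : Fin d} (hi : k ≠ i) (hj : k ≠ j) (θ : ℝ)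
    (x : EuclideanSpace ℝ (Fin d)) : planeRotFun i j θ x k = x k := by
  simp [planeRotFun, hi, hj]

theorem planeRotFun_planeRotFun (hij : i ≠ j) (a b : ℝ) (x : EuclideanSpace ℝ (Fin d)) :
    planeRotFun i j a (planeRotFun i j b x) = planeRotFun i j (a + b) x := by
  ext k
  by_cases hi : k = i
  · subst hi
    simp only [planeRotFun_apply_left, planeRotFun_apply_right hij, cos_add, sin_add]
    ring
  by_cases hj : k = j
  · subst hj
    simp only [planeRotFun_apply_left, planeRotFun_apply_right hij, cos_add, sin_add]
    ring
  simp only [planeRotFun_apply_of_ne hi hj]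

theorem planeRotFun_zero (x : EuclideanSpace ℝ (Fin d)) : planeRotFun i j 0 x = x := by
  ext k
  simp only [planeRotFun, cos_zero, sin_zero]
  split_ifs with hi hj
  · simp [hi]
  · simp [hj]
  · rfl

theorem norm_planeRotFun (hij : i ≠ j) (θ : ℝ) (x : EuclideanSpace ℝ (Fin d)) :
    ‖planeRotFun i j θ x‖ = ‖x‖ := by
  refine (sq_eq_sq₀ (norm_nonneg _) (norm_nonneg _)).mp ?_
  rw [EuclideanSpace.real_norm_sq_eq, EuclideanSpace.real_norm_sq_eq, ← sub_eq_zero,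
    ← Finset.sum_sub_distrib, Fintype.sum_eq_add i j hij fun k ⟨hi, hj⟩ => by
      rw [planeRotFun_apply_of_ne hi hj, sub_self],
    planeRotFun_apply_left, planeRotFun_apply_right hij]
  linear_combination (x i ^ 2 + x j ^ 2) * sin_sq_add_cos_sq θ

noncomputable def planeRotation (hij : i ≠ j) (θ : ℝ) :
    EuclideanSpace ℝ (Fin d) ≃ₗᵢ[ℝ] EuclideanSpace ℝ (Fin d) where
  toFun := planeRotFun i j θ
  invFun := planeRotFun i j (-θ)
  map_add' x y := by
    ext k
    simp only [planeRotFun, PiLp.add_apply]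
    split_ifs <;> ring
  map_smul' c x := by
    ext k
    simp only [planeRotFun, PiLp.smul_apply, smul_eq_mul, RingHom.id_apply]
    split_ifs <;> ring
  left_inv x := by rw [planeRotFun_planeRotFun hij, neg_add_cancel, planeRotFun_zero]
  right_inv x := by rw [planeRotFun_planeRotFun hij, add_neg_cancel, planeRotFun_zero]
  norm_map' := norm_planeRotFun hij θ

theorem planeRotation_apply (hij : i ≠ j) (θ : ℝ) (x : EuclideanSpace ℝ (Fin d)) :
    planeRotation hij θ x = planeRotFun i j θ x := rfl

theorem planeRotation_pow (hij : i ≠ j) (θ : ℝ) (n : ℕ) :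
    planeRotation hij θ ^ n = planeRotation hij (n * θ) := by
  induction n with
  | zero =>
    ext x : 1
    simp [planeRotation_apply, planeRotFun_zero]
  | succ n ih =>
    ext x : 1
    rw [pow_succ, LinearIsometryEquiv.coe_mul, Function.comp_apply, ih, planeRotation_apply,
      planeRotation_apply, planeRotation_apply, planeRotFun_planeRotFun hij, Nat.cast_succ,
      add_one_mul]

theorem planeRotation_smul_add_smul (hij : i ≠ j) (θ a b : ℝ) :
    planeRotation hij θ (a • EuclideanSpace.single i 1 + b • EuclideanSpace.single j 1) =
      (cos θ * a - sin θ * b) • EuclideanSpace.single i 1 +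
        (sin θ * a + cos θ * b) • EuclideanSpace.single j 1 := by
  ext k
  rw [planeRotation_apply]
  by_cases hi : k = i
  · subst hi
    simp [planeRotFun_apply_left, hij, hij.symm]
  by_cases hj : k = j
  · subst hj
    simp [planeRotFun_apply_right hij, hij, hij.symm]
  simp [planeRotFun_apply_of_ne hi hj, hi, hj]

theorem planeRotation_mem_span (hij : i ≠ j) (θ : ℝ) {x : EuclideanSpace ℝ (Fin d)}
    (hx : x ∈ Submodule.span ℝ {EuclideanSpace.single i 1, EuclideanSpace.single j 1}) :
    planeRotation hij θ x ∈
      Submodule.span ℝ {EuclideanSpace.single i 1, EuclideanSpace.single j 1} := by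
  obtain ⟨a, b, rfl⟩ := Submodule.mem_span_pair.mp hx
  rw [planeRotation_smul_add_smul]
  exact Submodule.mem_span_pair.mpr ⟨_, _, rfl⟩

theorem eq_zero_of_planeRotation_eq_self (hij : i ≠ j) {θ : ℝ} (hθ : cos θ ≠ 1)
    {x : EuclideanSpace ℝ (Fin d)}
    (hx : x ∈ Submodule.span ℝ {EuclideanSpace.single i 1, EuclideanSpace.single j 1})
    (hfix : planeRotation hij θ x = x) : x = 0 := by
  obtain ⟨a, b, rfl⟩ := Submodule.mem_span_pair.mp hx
  rw [planeRotation_smul_add_smul] at hfix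
  have hi := congrArg (· i) hfix
  have hj := congrArg (· j) hfix
  simp [hij, hij.symm] at hi hj
  have hc : (0 : ℝ) < 2 - 2 * cos θ := by linarith [lt_of_le_of_ne (cos_le_one θ) hθ]
  have ha : (2 - 2 * cos θ) * a = 0 := by
    linear_combination (cos θ - 1) * hi + sin θ * hj - a * sin_sq_add_cos_sq θ
  have hb : (2 - 2 * cos θ) * b = 0 := by
    linear_combination -sin θ * hi + (cos θ - 1) * hj - b * sin_sq_add_cos_sq θ
  simp [(mul_eq_zero.mp ha).resolve_left hc.ne', (mul_eq_zero.mp hb).resolve_left hc.ne']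

end PlaneRotation

namespace Real

theorem abs_sin_sub_le (a b : ℝ) : |sin (b - a)| ≤ |cos a| + |cos b| := by
  rw [sin_sub]
  calc |sin b * cos a - cos b * sin a| ≤ |sin b| * |cos a| + |cos b| * |sin a| := by
        rw [← abs_mul, ← abs_mul]; exact abs_sub _ _
    _ ≤ 1 * |cos a| + |cos b| * 1 := by gcongr <;> exact abs_sin_le_one _
    _ = |cos a| + |cos b| := by ring

theorem nat_mul_abs_sin_le_sum_abs_cos (θ : ℝ) (n : ℕ) :
    n * |sin θ| ≤ 2 * ∑ k ∈ Finset.range (n + 1), |cos (k * θ)| := by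
  have hpair (k : ℕ) : |sin θ| ≤ |cos (k * θ)| + |cos ((k + 1 : ℕ) * θ)| := by
    simpa [add_mul] using abs_sin_sub_le (k * θ) ((k + 1 : ℕ) * θ)
  have hsum := Finset.sum_le_sum fun k (_ : k ∈ Finset.range n) => hpair k
  rw [Finset.sum_const, Finset.card_range, nsmul_eq_mul, Finset.sum_add_distrib] at hsum
  have hsucc := Finset.sum_range_succ' (fun k => |cos (k * θ)|) n
  rw [Finset.sum_range_succ] at hsucc ⊢
  push_cast at hsum hsucc ⊢
  linarith [abs_nonneg (cos (n * θ)), abs_nonneg (cos (0 * θ))]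

theorem cos_natCast_ne_one {n : ℕ} (hn : n ≠ 0) : cos n ≠ 1 := by
  rw [Ne, cos_eq_one_iff]
  rintro ⟨k, hk⟩
  have hk0 : (k : ℝ) ≠ 0 := by
    rintro h
    rw [h, zero_mul] at hk
    exact hn (by exact_mod_cast hk.symm)
  exact irrational_pi.ne_rat (n / (2 * k)) (by push_cast; field_simp; linarith)

end Real

section RotationPair

open Real

variable {d : ℕ} {i j : Fin d}

def rotationPair (hij : i ≠ j) : Set (EuclideanSpace ℝ (Fin d) ≃ᵢ EuclideanSpace ℝ (Fin d)) :=
  affineIso (planeRotation hij 1) '' {0, EuclideanSpace.single i 1}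

theorem rotationPair_finite (hij : i ≠ j) : (rotationPair hij).Finite :=
  (Set.toFinite _).image _

theorem exists_fixed_of_mem_rotationPair_pow (hij : i ≠ j) {n : ℕ} (hn : 1 ≤ n)
    {g : EuclideanSpace ℝ (Fin d) ≃ᵢ EuclideanSpace ℝ (Fin d)} (hg : g ∈ rotationPair hij ^ n) :
    ∃ x, g x = x := by
  set W := Submodule.span ℝ {EuclideanSpace.single i (1 : ℝ), EuclideanSpace.single j 1}
  have hTW : {0, EuclideanSpace.single i 1} ⊆ (W : Set (EuclideanSpace ℝ (Fin d))) :=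
    Set.insert_subset W.zero_mem (Set.singleton_subset_iff.mpr (Submodule.subset_span (by simp)))
  obtain ⟨t, ht, hgt⟩ :=
    exists_eq_pow_add_of_mem_pow _ (fun _ => planeRotation_mem_span hij 1) hTW hg
  rw [planeRotation_pow, mul_one] at hgt
  obtain ⟨x, hx⟩ := Submodule.exists_add_eq_self (W := W)
    (B := (planeRotation hij n).toLinearEquiv.toLinearMap) (fun _ => planeRotation_mem_span hij n)
    (fun _ => eq_zero_of_planeRotation_eq_self hij (cos_natCast_ne_one (by omega))) ht
  exact ⟨x, (hgt x).trans hx⟩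

theorem not_exists_common_fixed_rotationPair (hij : i ≠ j) :
    ¬ ∃ x, ∀ s ∈ rotationPair hij, s x = x := by
  rintro ⟨x, hx⟩
  have h0 := hx _ (Set.mem_image_of_mem _ (Set.mem_insert _ _))
  have h1 := hx _ (Set.mem_image_of_mem _ (Set.mem_insert_of_mem _ rfl))
  rw [affineIso_apply, add_zero] at h0
  rw [affineIso_apply, h0, add_eq_left] at h1
  simpa using congrArg (· i) h1

theorem asympDisp_rotationPair_pos (hij : i ≠ j) : 0 < asympDisp (rotationPair hij) := by
  have hsin : 0 < sin 1 := sin_pos_of_pos_of_lt_pi one_pos (by linarith [pi_gt_three])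
  refine asympDisp_pos (rotationPair_finite hij) (by positivity : 0 < sin 1 / 4) fun n => ?_
  set e := EuclideanSpace.single i (1 : ℝ) with he
  let v : ℕ → EuclideanSpace ℝ (Fin d) := fun k => if 0 ≤ cos k then e else 0
  let v' : ℕ → EuclideanSpace ℝ (Fin d) := fun k => if 0 ≤ cos k then 0 else e
  have hmem {w : ℕ → EuclideanSpace ℝ (Fin d)} (hw : ∀ k, w k = e ∨ w k = 0) :
      affineWord (planeRotation hij 1) w (n + 1) ∈ rotationPair hij ^ (n + 1) :=
    affineWord_mem _ (fun k => by rcases hw k with h | h <;> simp [h, he]) _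
  have hcoord (k : ℕ) : (planeRotation hij 1 ^ k) (v k - v' k) i = |cos k| := by
    rw [planeRotation_pow, mul_one, planeRotation_apply, planeRotFun_apply_left]
    by_cases hk : 0 ≤ cos (k : ℝ)
    · simp [v, v', hk, abs_of_nonneg hk, he, hij.symm]
    · simp [v, v', hk, abs_of_neg (not_le.mp hk), he, hij.symm]
  have hdist (x : EuclideanSpace ℝ (Fin d)) : ∑ k ∈ Finset.range (n + 1), |cos (k : ℝ)| ≤
      dist (affineWord (planeRotation hij 1) v (n + 1) x)
        (affineWord (planeRotation hij 1) v' (n + 1) x) := by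
    rw [dist_affineWord]
    refine (le_of_eq ?_).trans <|
      (Real.le_norm_self _).trans (PiLp.norm_apply_le (β := fun _ => ℝ) _ i)
    simp only [WithLp.ofLp_sum, Finset.sum_apply, hcoord]
  have hlow := le_two_mul_jointMinDisp ((rotationPair_finite hij).pow _)
    (hmem fun k => by by_cases hk : 0 ≤ cos (k : ℝ) <;> simp [v, hk])
    (hmem fun k => by by_cases hk : 0 ≤ cos (k : ℝ) <;> simp [v', hk]) hdist
  have htrig := nat_mul_abs_sin_le_sum_abs_cos 1 n
  simp only [mul_one, abs_of_pos hsin] at htrig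
  linarith

end RotationPair

/-- For every `d ≥ 4` there is a finite set `S` of isometries of `ℝᵈ` with
`ℓ(S) > 0` but `λ_∞(S) = 0`: every element of the semigroup generated by `S` has a fixed point,
yet `S` has no common fixed point. In particular the Berger–Wang identity fails in `Isom(ℝᵈ)`. -/
theorem berger_wang_fails_euclidean (d : ℕ) (hd : 4 ≤ d) :
    ∃ S : Set (EuclideanSpace ℝ (Fin d) ≃ᵢ EuclideanSpace ℝ (Fin d)),
      S.Finite ∧ 0 < asympDisp S ∧ lamInf S = 0 ∧
      (∀ n : ℕ, 1 ≤ n → ∀ g ∈ S ^ n, ∃ x : EuclideanSpace ℝ (Fin d), g x = x) ∧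
      ¬ ∃ x : EuclideanSpace ℝ (Fin d), ∀ s ∈ S, s x = x := by
  have hij : (⟨0, by omega⟩ : Fin d) ≠ ⟨1, by omega⟩ := by simp
  have hfixed : ∀ n : ℕ, 1 ≤ n → ∀ g ∈ rotationPair hij ^ n, ∃ x, g x = x :=
    fun _ hn _ hg => exists_fixed_of_mem_rotationPair_pow hij hn hg
  exact ⟨rotationPair hij, rotationPair_finite hij, asympDisp_rotationPair_pos hij,
    lamInf_eq_zero hfixed, hfixed, not_exists_common_fixed_rotationPair hij⟩
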